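/- arXiv:2403.14491 — 2 statements merged into one kernel-verified Lean document; each statement's English description precedes it below -/
import Mathlib

section
/- Let N be a binary tree-child phylogenetic network. There is a bijection between the set of cherry reduction sequences of N and the set of linear extensions of the poset T(int N) of internal tree nodes of N ordered by reachability. In particular, the number of cherry reduction sequences of N equals the number of linear extensions of T(int N). -/
open Set

namespace Phylo

variable {V : Type*}

/-- In-degree of a node in a digraph given by its edge relation. -/
noncomputable def inDeg (N : V → V → Prop) (v : V) : ℕ := {u | N u v}.ncard

/-- Out-degree of a node. -/
noncomputable def outDeg (N : V → V → Prop) (v : V) : ℕ := {w | N v w}.ncard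

/-- Reachability: existence of a directed path. -/
def Reach (N : V → V → Prop) : V → V → Prop := Relation.ReflTransGen N

/-- Leaves: nodes of out-degree 0. -/
def leaves (N : V → V → Prop) : Set V := {v | outDeg N v = 0}

/-- Internal tree nodes, i.e. the set `T(int N)`. -/
def ITN (N : V → V → Prop) : Set V := {v | inDeg N v ≤ 1 ∧ 1 ≤ outDeg N v}

/-- A (rooted) phylogenetic network structure on the digraph `N` with root `ρ`. -/
structure IsPhyloNet (N : V → V → Prop) (ρ : V) : Prop where
  acyclic : ∀ v, ¬ Relation.TransGen N v v
  root_indeg : inDeg N ρ = 0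
  root_connects : ∀ v, Reach N ρ v
  retic_out : ∀ v, 2 ≤ inDeg N v → outDeg N v = 1
  no_elementary : ∀ v, ¬ (inDeg N v = 1 ∧ outDeg N v = 1)

/-- Binarity of a phylogenetic network. -/
structure IsBinary (N : V → V → Prop) (ρ : V) : Prop where
  retic_deg : ∀ v, 2 ≤ inDeg N v → inDeg N v = 2 ∧ outDeg N v = 1
  tree_deg : ∀ v, v ≠ ρ → inDeg N v ≤ 1 → 1 ≤ outDeg N v →
      inDeg N v = 1 ∧ outDeg N v = 2
  root_deg : outDeg N ρ = 2 ∨ outDeg N ρ = 0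

/-- Tree-child: every internal node has a child of tree type (in-degree ≤ 1). -/
def IsTreeChild (N : V → V → Prop) : Prop :=
  ∀ v, 1 ≤ outDeg N v → ∃ w, N v w ∧ inDeg N w ≤ 1

/-- `u` is the tree-node root of a cherry. -/
def IsCherryRoot (N : V → V → Prop) (u : V) : Prop :=
  inDeg N u ≤ 1 ∧ ∃ x y, x ≠ y ∧ N u x ∧ N u y ∧ outDeg N x = 0 ∧ outDeg N y = 0 ∧
    ∀ w, N u w → w = x ∨ w = y

/-- `u` is the tree-node root of a reticulated cherry. -/
def IsRetCherryRoot (N : V → V → Prop) (u : V) : Prop :=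
  inDeg N u ≤ 1 ∧ ∃ h y, h ≠ y ∧ N u h ∧ N u y ∧ 2 ≤ inDeg N h ∧ outDeg N y = 0 ∧
    (∃ x, N h x ∧ outDeg N x = 0 ∧ ∀ w, N h w → w = x) ∧
    ∀ w, N u w → w = h ∨ w = y

/-- Terminal node: root of a cherry or of a reticulated cherry. -/
def IsTerminal (N : V → V → Prop) (u : V) : Prop :=
  IsCherryRoot N u ∨ IsRetCherryRoot N u

/-- Cherry reduction rooted at `u`: remove all descendant edges of `u`
(and hence all strict descendant tree nodes of `u` become isolated/removed). -/
def CR (N : V → V → Prop) (u : V) : V → V → Prop :=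
  fun a b => N a b ∧ ¬ Reach N u a

/-- `IsCRSeq N L` : `L` is the list of reduced nodes of a full cherry reduction
sequence of `N`, ending in a single-node network (no edges left). -/
def IsCRSeq : (V → V → Prop) → List V → Prop
  | N, [] => ∀ a b, ¬ N a b
  | N, u :: us => IsTerminal N u ∧ IsCRSeq (CR N u) us

/-- Orchard networks: those admitting a full cherry reduction sequence. -/
def IsOrchard (N : V → V → Prop) : Prop := ∃ L, IsCRSeq N L

/-- Underlying undirected graph of a digraph. -/
def underlying (N : V → V → Prop) : SimpleGraph V := SimpleGraph.fromRel N

/-- Cover relation of the reachability poset on internal tree nodes. -/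
def Covers (N : V → V → Prop) (u v : V) : Prop :=
  u ∈ ITN N ∧ v ∈ ITN N ∧ u ≠ v ∧ Reach N u v ∧
    ¬ ∃ z ∈ ITN N, z ≠ u ∧ z ≠ v ∧ Reach N u z ∧ Reach N z v

/-- Biconnected set of nodes of an undirected graph. -/
def IsBiconn (G : SimpleGraph V) (B : Set V) : Prop :=
  B.Nonempty ∧ (G.induce B).Preconnected ∧ ∀ v ∈ B, (G.induce (B \ {v})).Preconnected

/-- Blob: maximal biconnected component. -/
def IsBlob (G : SimpleGraph V) (B : Set V) : Prop :=
  IsBiconn G B ∧ ∀ B', IsBiconn G B' → B ⊆ B' → B' = B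

/-- Level of a network: maximum number of reticulations in a blob. -/
noncomputable def level (N : V → V → Prop) : ℕ :=
  sSup {k | ∃ B, IsBlob (underlying N) B ∧ k = (B ∩ {v | 2 ≤ inDeg N v}).ncard}

/-- `H` is a minor of `G`, presented by branch sets. -/
def IsMinorOf {α β : Type*} (H : SimpleGraph β) (G : SimpleGraph α) : Prop :=
  ∃ f : β → Set α,
    (∀ b, (f b).Nonempty) ∧
    (∀ b, (G.induce (f b)).Preconnected) ∧
    (∀ b b', b ≠ b' → Disjoint (f b) (f b')) ∧
    (∀ b b', H.Adj b b' → ∃ x ∈ f b, ∃ y ∈ f b', G.Adj x y)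

/-- A list is a linear extension of the reachability poset on `T(int N)`. -/
def IsLinExtList (N : V → V → Prop) (L : List V) : Prop :=
  L.Nodup ∧ (∀ v, v ∈ L ↔ v ∈ ITN N) ∧
  ∀ (i j : ℕ) (hi : i < L.length) (hj : j < L.length),
    Reach N (L.get ⟨i, hi⟩) (L.get ⟨j, hj⟩) → i ≤ j

/-- A list is a linear extension of the order-dual of the reachability poset. -/
def IsDualLinExtList (N : V → V → Prop) (L : List V) : Prop :=
  L.Nodup ∧ (∀ v, v ∈ L ↔ v ∈ ITN N) ∧
  ∀ (i j : ℕ) (hi : i < L.length) (hj : j < L.length),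
    Reach N (L.get ⟨j, hj⟩) (L.get ⟨i, hi⟩) → i ≤ j

end Phylo

/-!
A cherry reduction at a terminal node `u` removes exactly the internal tree node `u`, and the
terminal nodes are precisely the internal tree nodes that are minimal for reachability: every
strict descendant of `u` that is a tree node must be a leaf, and binarity together with the
tree-child property then force the two children of `u` to form a cherry or a reticulated cherry.
Hence, by induction along the sequence, a cherry reduction sequence is a list of all internal tree
nodes in which no node reaches an earlier one, i.e. a linear extension of the dual of `T(int N)`,
and list reversal is the bijection.
-/

namespace Phylo

variable {V : Type*} {M : V → V → Prop} {u v w a b : V}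

section Degrees

variable [Finite V]

lemma outDeg_eq_zero_iff : outDeg M v = 0 ↔ ∀ w, ¬ M v w := by
  rw [outDeg, Set.ncard_eq_zero, Set.eq_empty_iff_forall_notMem]
  rfl

lemma one_le_outDeg_iff : 1 ≤ outDeg M v ↔ ∃ w, M v w :=
  Set.ncard_pos

lemma one_le_inDeg_iff : 1 ≤ inDeg M v ↔ ∃ u, M u v :=
  Set.ncard_pos

lemma inDeg_CR_le : inDeg (CR M u) v ≤ inDeg M v :=
  Set.ncard_le_ncard fun _ hs => hs.1

lemma outDeg_CR_of_reach (h : Reach M u v) : outDeg (CR M u) v = 0 :=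
  outDeg_eq_zero_iff.2 fun _ hw => hw.2 h

end Degrees

lemma CR_le : CR M u ≤ M := fun _ _ h => h.1

lemma outDeg_CR_of_not_reach (h : ¬ Reach M u v) : outDeg (CR M u) v = outDeg M v := by
  simp only [outDeg, CR, h, not_false_eq_true, and_true]

lemma inDeg_CR_of_not_reach (h : ¬ Reach M u v) : inDeg (CR M u) v = inDeg M v := by
  unfold inDeg
  congr 1
  ext s
  exact and_iff_left_of_imp fun hsv hus => h (hus.tail hsv)

lemma reach_CR_iff (hb : ¬ Reach M u b) : Reach (CR M u) a b ↔ Reach M a b := by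
  refine ⟨Relation.ReflTransGen.mono CR_le a b, fun hab => ?_⟩
  induction hab using Relation.ReflTransGen.head_induction_on with
  | refl => exact .refl
  | head hac hcb ih => exact .head ⟨hac, fun hua => hb (hua.trans (.head hac hcb))⟩ ih

lemma exists_mem_ITN_of_edge [Finite V] (hacyc : ∀ v, ¬ Relation.TransGen M v v)
    (hab : M a b) : ∃ v, v ∈ ITN M := by
  have : Std.Irrefl (Relation.TransGen M) := ⟨hacyc⟩
  obtain ⟨v, hv, hmin⟩ := (Finite.wellFounded_of_trans_of_irrefl (Relation.TransGen M)).has_min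
    {x | 1 ≤ outDeg M x} ⟨a, one_le_outDeg_iff.2 ⟨b, hab⟩⟩
  have hroot : inDeg M v = 0 := by
    by_contra h
    obtain ⟨p, hp⟩ := one_le_inDeg_iff.1 (Nat.one_le_iff_ne_zero.2 h)
    exact hmin p (one_le_outDeg_iff.2 ⟨v, hp⟩) (.single hp)
  exact ⟨v, by omega, hv⟩

lemma ITN_eq_empty_iff [Finite V] (hacyc : ∀ v, ¬ Relation.TransGen M v v) :
    ITN M = ∅ ↔ ∀ a b, ¬ M a b := by
  refine ⟨fun h a b hab => ?_, fun h => Set.eq_empty_of_forall_notMem fun v hv => ?_⟩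
  · obtain ⟨v, hv⟩ := exists_mem_ITN_of_edge hacyc hab
    exact h.subset hv
  · obtain ⟨w, hw⟩ := one_le_outDeg_iff.1 hv.2
    exact h v w hw

namespace IsTerminal

lemma mem_ITN [Finite V] (ht : IsTerminal M u) : u ∈ ITN M := by
  rcases ht with ⟨hin, x, -, -, hux, -⟩ | ⟨hin, h, -, -, huh, -⟩
  · exact ⟨hin, one_le_outDeg_iff.2 ⟨x, hux⟩⟩
  · exact ⟨hin, one_le_outDeg_iff.2 ⟨h, huh⟩⟩

lemma child_cases (ht : IsTerminal M u) (huw : M u w) :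
    outDeg M w = 0 ∨ (2 ≤ inDeg M w ∧ ∀ x, M w x → outDeg M x = 0) := by
  rcases ht with ⟨-, x, y, -, -, -, hx, hy, hall⟩ |
      ⟨-, h, y, -, -, -, hh, hy, ⟨x, -, hx, hhx⟩, hall⟩
  · rcases hall w huw with rfl | rfl
    exacts [Or.inl hx, Or.inl hy]
  · rcases hall w huw with rfl | rfl
    · exact Or.inr ⟨hh, fun x' hx' => hhx x' hx' ▸ hx⟩
    · exact Or.inl hy

lemma eq_of_reach [Finite V] (ht : IsTerminal M u) (hr : Reach M u v) (hv : v ∈ ITN M) :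
    v = u := by
  rcases Relation.ReflTransGen.cases_head hr with rfl | ⟨w, huw, hwv⟩
  · rfl
  -- Below a child of `u`, the only edges left lead from a reticulation to a leaf.
  have hbelow : outDeg M v = 0 ∨ (2 ≤ inDeg M v ∧ ∀ x, M v x → outDeg M x = 0) := by
    clear hr hv
    induction hwv with
    | refl => exact ht.child_cases huw
    | tail _ hcd ih =>
      rcases ih with h0 | ⟨-, hleaf⟩
      · exact absurd hcd (outDeg_eq_zero_iff.1 h0 _)
      · exact Or.inl (hleaf _ hcd)
  have := hv.1
  have := hv.2
  omega

lemma ITN_CR [Finite V] (ht : IsTerminal M u) : ITN (CR M u) = ITN M \ {u} := by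
  ext v
  constructor
  · rintro ⟨hin, hout⟩
    obtain ⟨w, -, hnr⟩ := one_le_outDeg_iff.1 hout
    rw [inDeg_CR_of_not_reach hnr] at hin
    rw [outDeg_CR_of_not_reach hnr] at hout
    exact ⟨⟨hin, hout⟩, fun (e : v = u) => hnr (e ▸ .refl)⟩
  · rintro ⟨hv, hne⟩
    have hnr : ¬ Reach M u v := fun hr => hne (ht.eq_of_reach hr hv)
    exact ⟨inDeg_CR_of_not_reach hnr ▸ hv.1, outDeg_CR_of_not_reach hnr ▸ hv.2⟩

end IsTerminal

lemma outDeg_eq_zero_of_minimal (hmin : ∀ v ∈ ITN M, Reach M u v → v = u) (hr : Reach M u v)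
    (hne : v ≠ u) (hin : inDeg M v ≤ 1) : outDeg M v = 0 := by
  by_contra h
  exact hne (hmin v ⟨hin, by omega⟩ hr)

/-- Cherry reductions leave the removed nodes behind as isolated vertices, so `IsPhyloNet` is not
preserved along a reduction sequence; these consequences of it, binarity and tree-childness are. -/
structure IsBinaryTreeChild (M : V → V → Prop) : Prop where
  acyclic : ∀ v, ¬ Relation.TransGen M v v
  outDeg_of_mem_ITN : ∀ v ∈ ITN M, outDeg M v = 2
  outDeg_le_one_of_two_le_inDeg : ∀ v, 2 ≤ inDeg M v → outDeg M v ≤ 1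
  treeChild : IsTreeChild M

namespace IsBinaryTreeChild

lemma of_isPhyloNet {ρ : V} (hphy : IsPhyloNet M ρ) (hbin : IsBinary M ρ)
    (htc : IsTreeChild M) : IsBinaryTreeChild M where
  acyclic := hphy.acyclic
  outDeg_of_mem_ITN v hv := by
    by_cases hρ : v = ρ
    · subst hρ
      have := hv.2
      have := hbin.root_deg
      omega
    · exact (hbin.tree_deg v hρ hv.1 hv.2).2
  outDeg_le_one_of_two_le_inDeg v h := (hphy.retic_out v h).le
  treeChild := htc

lemma ne_of_edge (hM : IsBinaryTreeChild M) (h : M u w) : w ≠ u := by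
  rintro rfl
  exact hM.acyclic w (.single h)

variable [Finite V]

lemma CR (hM : IsBinaryTreeChild M) (ht : IsTerminal M u) : IsBinaryTreeChild (CR M u) where
  acyclic v hv := hM.acyclic v (Relation.TransGen.mono CR_le v v hv)
  outDeg_of_mem_ITN v hv := by
    rw [ht.ITN_CR] at hv
    have hnr : ¬ Reach M u v := fun hr => hv.2 (ht.eq_of_reach hr hv.1)
    rw [outDeg_CR_of_not_reach hnr]
    exact hM.outDeg_of_mem_ITN v hv.1
  outDeg_le_one_of_two_le_inDeg v h2 := by
    by_cases hr : Reach M u v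
    · rw [outDeg_CR_of_reach hr]
      omega
    · rw [outDeg_CR_of_not_reach hr]
      exact hM.outDeg_le_one_of_two_le_inDeg v (h2.trans inDeg_CR_le)
  treeChild v h1 := by
    by_cases hr : Reach M u v
    · rw [outDeg_CR_of_reach hr] at h1
      omega
    · rw [outDeg_CR_of_not_reach hr] at h1
      obtain ⟨w, hw, hwin⟩ := hM.treeChild v h1
      exact ⟨w, ⟨hw, hr⟩, inDeg_CR_le.trans hwin⟩

section Minimal

variable (hM : IsBinaryTreeChild M) (hmin : ∀ v ∈ ITN M, Reach M u v → v = u)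
include hM hmin

lemma reticulation_child_of_minimal (hub : M u b) (hb : outDeg M b ≠ 0) :
    2 ≤ inDeg M b ∧ ∃ x, M b x ∧ outDeg M x = 0 ∧ ∀ w, M b w → w = x := by
  have hb2 : 2 ≤ inDeg M b := by
    by_contra h
    exact hb (outDeg_eq_zero_of_minimal hmin (.single hub) (hM.ne_of_edge hub) (by omega))
  have hb1 : outDeg M b ≤ 1 := hM.outDeg_le_one_of_two_le_inDeg b hb2
  obtain ⟨x, hbx, hx⟩ := hM.treeChild b (by omega)
  have hxu : x ≠ u := by
    rintro rfl
    exact hM.acyclic x (.head hub (.single hbx))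
  exact ⟨hb2, x, hbx, outDeg_eq_zero_of_minimal hmin ((Relation.ReflTransGen.single hub).tail hbx)
    hxu hx, fun w hw => (Set.ncard_le_one_iff (Set.toFinite _)).1 hb1 hw hbx⟩

lemma isTerminal_of_minimal (hu : u ∈ ITN M) : IsTerminal M u := by
  obtain ⟨c, d, hcd, hch⟩ := Set.ncard_eq_two.1 (hM.outDeg_of_mem_ITN u hu)
  have hchild : ∀ w, M u w ↔ w = c ∨ w = d := fun w => Set.ext_iff.1 hch w
  obtain ⟨t, hut, ht⟩ := hM.treeChild u hu.2
  have ht0 : outDeg M t = 0 :=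
    outDeg_eq_zero_of_minimal hmin (.single hut) (hM.ne_of_edge hut) ht
  obtain ⟨a, b, hab, hch, ha⟩ :
      ∃ a b, a ≠ b ∧ (∀ w, M u w ↔ w = a ∨ w = b) ∧ outDeg M a = 0 := by
    rcases (hchild t).1 hut with rfl | rfl
    exacts [⟨t, d, hcd, hchild, ht0⟩, ⟨t, c, hcd.symm, fun w => (hchild w).trans or_comm, ht0⟩]
  have hua : M u a := (hch a).2 (.inl rfl)
  have hub : M u b := (hch b).2 (.inr rfl)
  by_cases hb : outDeg M b = 0
  · exact Or.inl ⟨hu.1, a, b, hab, hua, hub, ha, hb, fun w hw => (hch w).1 hw⟩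
  · obtain ⟨hb2, hbx⟩ := hM.reticulation_child_of_minimal hmin hub hb
    exact Or.inr ⟨hu.1, b, a, hab.symm, hub, hua, hb2, ha, hbx, fun w hw => ((hch w).1 hw).symm⟩

end Minimal

end IsBinaryTreeChild

lemma _root_.List.forall_rel_get_imp_le_iff_pairwise {α : Type*} {R : α → α → Prop}
    {L : List α} :
    (∀ (i j : ℕ) (hi : i < L.length) (hj : j < L.length),
      R (L.get ⟨j, hj⟩) (L.get ⟨i, hi⟩) → i ≤ j) ↔ L.Pairwise fun a b => ¬ R a b := by
  simp only [List.pairwise_iff_getElem, List.get_eq_getElem]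
  constructor
  · intro h i j hi hj hij hR
    have := h j i hj hi hR
    omega
  · intro h i j hi hj hR
    by_contra hlt
    exact h j i hj hi (by omega) hR

lemma isDualLinExtList_iff {L : List V} : IsDualLinExtList M L ↔
    L.Nodup ∧ (∀ v, v ∈ L ↔ v ∈ ITN M) ∧ L.Pairwise fun a b => ¬ Reach M a b :=
  and_congr_right' (and_congr_right' List.forall_rel_get_imp_le_iff_pairwise)

lemma isLinExtList_iff {L : List V} : IsLinExtList M L ↔
    L.Nodup ∧ (∀ v, v ∈ L ↔ v ∈ ITN M) ∧ L.Pairwise fun a b => ¬ Reach M b a :=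
  and_congr_right' <| and_congr_right' <|
    List.forall_rel_get_imp_le_iff_pairwise (R := flip (Reach M))

lemma isLinExtList_reverse_iff {L : List V} :
    IsLinExtList M L.reverse ↔ IsDualLinExtList M L := by
  simp only [isLinExtList_iff, isDualLinExtList_iff, List.nodup_reverse, List.mem_reverse,
    List.pairwise_reverse]

lemma isDualLinExtList_nil_iff : IsDualLinExtList M [] ↔ ITN M = ∅ := by
  simp [isDualLinExtList_iff, Set.eq_empty_iff_forall_notMem]

lemma IsDualLinExtList.head_minimal {us : List V} (h : IsDualLinExtList M (u :: us)) :
    u ∈ ITN M ∧ ∀ v ∈ ITN M, Reach M u v → v = u := by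
  obtain ⟨-, hmem, hpw⟩ := isDualLinExtList_iff.1 h
  refine ⟨(hmem u).1 List.mem_cons_self, fun v hv hr => ?_⟩
  rcases List.mem_cons.1 ((hmem v).2 hv) with rfl | hvus
  · rfl
  · exact absurd hr ((List.pairwise_cons.1 hpw).1 v hvus)

lemma isDualLinExtList_cons_iff [Finite V] {us : List V} (ht : IsTerminal M u) :
    IsDualLinExtList M (u :: us) ↔ IsDualLinExtList (CR M u) us := by
  have hnr : ∀ v ∈ ITN M \ {u}, ¬ Reach M u v := fun v hv hr => hv.2 (ht.eq_of_reach hr hv.1)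
  have hpw : (∀ v, v ∈ us ↔ v ∈ ITN M \ {u}) →
      (us.Pairwise (fun a b => ¬ Reach (CR M u) a b) ↔ us.Pairwise fun a b => ¬ Reach M a b) :=
    fun hmem => List.Pairwise.iff_of_mem fun _ hb =>
      not_congr (reach_CR_iff (hnr _ ((hmem _).1 hb)))
  simp only [isDualLinExtList_iff, ht.ITN_CR, List.nodup_cons, List.pairwise_cons, List.mem_cons]
  constructor
  · rintro ⟨⟨hu, hnd⟩, hmem, -, hpw'⟩
    have hmem' : ∀ v, v ∈ us ↔ v ∈ ITN M \ {u} := fun v =>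
      ⟨fun h => ⟨(hmem v).1 (.inr h), fun (e : v = u) => hu (e ▸ h)⟩,
        fun h => ((hmem v).2 h.1).resolve_left h.2⟩
    exact ⟨hnd, hmem', (hpw hmem').2 hpw'⟩
  · rintro ⟨hnd, hmem, hpw'⟩
    refine ⟨⟨fun h => ((hmem u).1 h).2 rfl, hnd⟩, fun v => ?_, fun v hv => hnr v ((hmem v).1 hv),
      (hpw hmem).1 hpw'⟩
    rw [hmem]
    by_cases hvu : v = u
    · simp [hvu, ht.mem_ITN]
    · simp [hvu]

theorem isCRSeq_iff_isDualLinExtList [Finite V] {L : List V} (hM : IsBinaryTreeChild M) :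
    IsCRSeq M L ↔ IsDualLinExtList M L := by
  induction L generalizing M with
  | nil => exact (ITN_eq_empty_iff hM.acyclic).symm.trans isDualLinExtList_nil_iff.symm
  | cons u us ih =>
    constructor
    · rintro ⟨ht, hseq⟩
      exact (isDualLinExtList_cons_iff ht).2 ((ih (hM.CR ht)).1 hseq)
    · intro h
      obtain ⟨hu, hmin⟩ := h.head_minimal
      have ht := hM.isTerminal_of_minimal hmin hu
      exact ⟨ht, (ih (hM.CR ht)).2 ((isDualLinExtList_cons_iff ht).1 h)⟩

end Phylo

open Phylo

/-- for a binary tree-child network there is a bijection between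
cherry reduction sequences and linear extensions of `T(int N)`; in particular
the two sets have the same cardinality. -/
theorem stmt5 {V : Type*} [Fintype V] (N : V → V → Prop) (ρ : V)
    (hphy : IsPhyloNet N ρ) (hbin : IsBinary N ρ) (htc : IsTreeChild N) :
    Nonempty ({L : List V // IsCRSeq N L} ≃ {L : List V // IsLinExtList N L}) ∧
    Nat.card {L : List V // IsCRSeq N L} =
      Nat.card {L : List V // IsLinExtList N L} := by
  have hN : IsBinaryTreeChild N := .of_isPhyloNet hphy hbin htc
  let e : {L : List V // IsCRSeq N L} ≃ {L : List V // IsLinExtList N L} :=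
    (List.reverse_involutive.toPerm _).subtypeEquiv fun L => by
      rw [isCRSeq_iff_isDualLinExtList hN, ← isLinExtList_reverse_iff]
      rfl
  exact ⟨⟨e⟩, Nat.card_congr e⟩
end

section
/- If a binary phylogenetic network has a minor (of its underlying undirected graph) isomorphic to the n × m grid graph, then its level is at least (n-1)(m-1). -/
open Set

open Phylo

namespace Phylo

/-- The `n × m` grid graph. -/
def gridGraph (n m : ℕ) : SimpleGraph (Fin n × Fin m) :=
  SimpleGraph.fromRel (fun p q =>
    (p.1 = q.1 ∧ (p.2 : ℕ) + 1 = (q.2 : ℕ)) ∨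
    (p.2 = q.2 ∧ (p.1 : ℕ) + 1 = (q.1 : ℕ)))

end Phylo

/-!
Let `H` be a minor of the underlying graph of `N` that stays connected when any vertex is deleted,
as the grid does. For every edge of `H` pick an edge of `N` joining the two branch sets, and
shrink each branch set to a minimal connected set containing the chosen endpoints. The union `X`
of the shrunken branch sets is biconnected: after deleting a vertex of one branch set, each of its
remaining vertices is still joined to another branch set, and the other branch sets remain linked.
So `X` lies in a blob `B`. Now count arcs: `X` carries at least `|E(H)| + |X| - |V(H)|` of them,
growing `X` to the connected set `B` adds at least one arc per new vertex, and in the acyclic set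
`B` every vertex but a source has in-degree one unless it is a reticulation (of in-degree two).
Hence `B` holds at least `|E(H)| - |V(H)| + 1` reticulations, which is `(n - 1)(m - 1)` for the
`n × m` grid.
-/

open SimpleGraph Function
open scoped Finset

namespace SimpleGraph

section Induce

variable {V : Type*} {G : SimpleGraph V}

lemma exists_adj_of_induce_preconnected {S B : Set V} (hB : (G.induce B).Preconnected)
    (hSB : S ⊆ B) {x y : V} (hx : x ∈ S) (hy : y ∈ B \ S) : ∃ a ∈ S, ∃ b ∈ B \ S, G.Adj a b := by
  obtain ⟨p⟩ := hB ⟨x, hSB hx⟩ ⟨y, hy.1⟩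
  obtain ⟨d, -, hd₁, hd₂⟩ :=
    p.exists_boundary_dart {v | ↑v ∈ S} (by exact hx) (by exact hy.2)
  exact ⟨d.fst, hd₁, d.snd, ⟨d.snd.2, hd₂⟩, d.adj⟩

lemma induce_diff_preconnected {S C : Set V} {v : V} (hS : (G.induce S).Preconnected)
    (hv : v ∈ S) (hvC : v ∉ C) (hC : ∀ x ∈ C, ∀ y ∈ S, G.Adj x y → y = v ∨ y ∈ C) :
    (G.induce (S \ C)).Preconnected := by
  have hto : ∀ (x y : S) (p : (G.induce S).Walk x y), y.1 = v → ∀ hx : x.1 ∉ C,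
      (G.induce (S \ C)).Reachable ⟨x, x.2, hx⟩ ⟨v, hv, hvC⟩ := by
    intro x y p
    induction p with
    | nil =>
      rintro rfl _
      rfl
    | @cons x z y hxz q ih =>
      intro hy hx
      by_cases hxv : x.1 = v
      · obtain ⟨x, hxS⟩ := x
        subst hxv
        rfl
      · have hz : z.1 ∉ C := fun hz => (hC z hz x x.2 hxz.symm).elim hxv hx
        exact (Adj.reachable (by exact hxz)).trans (ih hy hz)
  rintro ⟨x, hxS, hxC⟩ ⟨y, hyS, hyC⟩
  obtain ⟨p⟩ := hS ⟨x, hxS⟩ ⟨v, hv⟩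
  obtain ⟨q⟩ := hS ⟨y, hyS⟩ ⟨v, hv⟩
  exact (hto _ _ p rfl hxC).trans (hto _ _ q rfl hyC).symm

/-- Take `S` minimal: a component of `S \ {v}` missing `A` could be cut off from `S`. -/
lemma exists_steiner [Finite V] {A F : Set V} (hAF : A ⊆ F) (hF : (G.induce F).Preconnected) :
    ∃ S, A ⊆ S ∧ S ⊆ F ∧ (G.induce S).Preconnected ∧
      ∀ v ∈ S, ∀ w (hw : w ∈ S \ {v}), ∃ a ∈ A, ∃ ha : a ∈ S \ {v},
        (G.induce (S \ {v})).Reachable ⟨w, hw⟩ ⟨a, ha⟩ := by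
  obtain ⟨S, -, hmin⟩ := Finite.exists_le_minimal
    (p := fun S : Set V => A ⊆ S ∧ S ⊆ F ∧ (G.induce S).Preconnected) ⟨hAF, subset_rfl, hF⟩
  obtain ⟨hAS, hSF, hS⟩ := hmin.prop
  refine ⟨S, hAS, hSF, hS, fun v hv w hw => ?_⟩
  by_contra! hcon
  set C := {u | ∃ hu : u ∈ S \ {v}, (G.induce (S \ {v})).Reachable ⟨w, hw⟩ ⟨u, hu⟩}
  have hC : ∀ x ∈ C, ∀ y ∈ S, G.Adj x y → y = v ∨ y ∈ C := by
    rintro x ⟨hx, hr⟩ y hy hxy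
    by_cases hyv : y = v
    · exact .inl hyv
    · exact .inr ⟨⟨hy, hyv⟩, hr.trans (Adj.reachable (by exact hxy))⟩
  have hAC : A ⊆ S \ C := fun a ha => ⟨hAS ha, fun ⟨haS, hr⟩ => hcon a ha haS hr⟩
  have hSC := hmin.eq_of_subset ⟨hAC, Set.sdiff_subset.trans hSF,
    induce_diff_preconnected hS hv (fun h => h.1.2 rfl) hC⟩ Set.sdiff_subset
  have hw' : w ∈ S \ C := by rw [hSC]; exact hw.1
  exact hw'.2 ⟨hw, Reachable.refl _⟩

lemma reachable_induce_of_reachable {β : Type*} {H : SimpleGraph β} {S : β → Set V} {X : Set V}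
    (hSX : ∀ b, S b ⊆ X) (hS : ∀ b, (G.induce (S b)).Preconnected)
    (hadj : ∀ b c, H.Adj b c → ∃ x ∈ S b, ∃ y ∈ S c, G.Adj x y) {b c : β}
    (hbc : H.Reachable b c) {u w : V} (hu : u ∈ S b) (hw : w ∈ S c) :
    (G.induce X).Reachable ⟨u, hSX b hu⟩ ⟨w, hSX c hw⟩ := by
  have hin : ∀ b {u w} (hu : u ∈ S b) (hw : w ∈ S b),
      (G.induce X).Reachable ⟨u, hSX b hu⟩ ⟨w, hSX b hw⟩ := fun b u w hu hw =>
    (hS b ⟨u, hu⟩ ⟨w, hw⟩).map (induceHomOfLE G (hSX b)).toHom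
  obtain ⟨p⟩ := hbc
  induction p generalizing u with
  | nil => exact hin _ hu hw
  | cons h q ih =>
    obtain ⟨x, hx, y, hy, hxy⟩ := hadj _ _ h
    exact (hin _ hu hx).trans ((Adj.reachable (by exact hxy :
      (G.induce X).Adj ⟨x, hSX _ hx⟩ ⟨y, hSX _ hy⟩)).trans (ih hy hw))

end Induce

section BoxProd

variable {α β : Type*} {G : SimpleGraph α} {H : SimpleGraph β}

lemma boxProd_induce_compl_preconnected [Nontrivial α] [Nontrivial β] (hG : G.Preconnected)
    (hH : H.Preconnected) (p : α × β) : ((G □ H).induce {p}ᶜ).Preconnected := by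
  have row : ∀ b, b ≠ p.2 → ∀ a a' h h',
      ((G □ H).induce {p}ᶜ).Reachable ⟨(a, b), h⟩ ⟨(a', b), h'⟩ := fun b hb a a' _ _ =>
    (hG a a').map (⟨fun a => ⟨(a, b), fun h => hb (congrArg Prod.snd h)⟩,
      fun h => boxProd_adj_left.2 h⟩ : G →g (G □ H).induce {p}ᶜ)
  have col : ∀ a, a ≠ p.1 → ∀ b b' h h',
      ((G □ H).induce {p}ᶜ).Reachable ⟨(a, b), h⟩ ⟨(a, b'), h'⟩ := fun a ha b b' _ _ =>
    (hH b b').map (⟨fun b => ⟨(a, b), fun h => ha (congrArg Prod.fst h)⟩,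
      fun h => boxProd_adj_right.2 h⟩ : H →g (G □ H).induce {p}ᶜ)
  obtain ⟨a₀, ha₀⟩ := exists_ne p.1
  obtain ⟨b₀, hb₀⟩ := exists_ne p.2
  have h₀ : (a₀, b₀) ∈ ({p}ᶜ : Set (α × β)) := fun h => ha₀ (congrArg Prod.fst h)
  have hto : ∀ q (hq : q ∈ ({p}ᶜ : Set (α × β))),
      ((G □ H).induce {p}ᶜ).Reachable ⟨q, hq⟩ ⟨(a₀, b₀), h₀⟩ := by
    rintro ⟨a, b⟩ hq
    by_cases ha : a = p.1
    · have hb : b ≠ p.2 := fun hb => hq (Prod.ext ha hb)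
      exact (row b hb a a₀ _ fun h => ha₀ (congrArg Prod.fst h)).trans (col a₀ ha₀ b b₀ _ _)
    · exact (col a ha b b₀ _ fun h => hb₀ (congrArg Prod.snd h)).trans (row b₀ hb₀ a a₀ _ _)
  rintro ⟨q, hq⟩ ⟨q', hq'⟩
  exact (hto q hq).trans (hto q' hq').symm

lemma card_edgeSet_boxProd [Finite α] [Finite β] :
    Nat.card (G □ H).edgeSet =
      Nat.card β * Nat.card G.edgeSet + Nat.card α * Nat.card H.edgeSet := by
  classical
  have := Fintype.ofFinite α
  have := Fintype.ofFinite β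
  have h := (G □ H).sum_degrees_eq_twice_card_edges
  simp only [degree_boxProd, Fintype.sum_prod_type, Finset.sum_add_distrib, Finset.sum_const,
    Finset.card_univ, smul_eq_mul, H.sum_degrees_eq_twice_card_edges] at h
  rw [Finset.sum_comm] at h
  simp only [Finset.sum_const, Finset.card_univ, smul_eq_mul,
    G.sum_degrees_eq_twice_card_edges] at h
  simp only [Nat.card_eq_fintype_card, ← edgeFinset_card]
  linarith

end BoxProd

end SimpleGraph

namespace Phylo

section Arcs

variable {V : Type*} [Fintype V] (N : V → V → Prop)

open scoped Classical in
noncomputable def arcsIn (S : Set V) : Finset (V × V) :=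
  Finset.univ.filter fun p => N p.1 p.2 ∧ p.1 ∈ S ∧ p.2 ∈ S

variable {N}

@[simp]
lemma mem_arcsIn {S : Set V} {p : V × V} : p ∈ arcsIn N S ↔ N p.1 p.2 ∧ p.1 ∈ S ∧ p.2 ∈ S := by
  classical
  simp [arcsIn]

lemma arcsIn_mono {S T : Set V} (h : S ⊆ T) : arcsIn N S ⊆ arcsIn N T := fun _ hp => by
  rw [mem_arcsIn] at hp ⊢
  exact ⟨hp.1, h hp.2.1, h hp.2.2⟩

lemma card_arcsIn_lt_card_arcsIn_insert {S : Set V} {a b : V} (ha : a ∈ S) (hb : b ∉ S)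
    (hab : (underlying N).Adj a b) : #(arcsIn N S) < #(arcsIn N (insert b S)) := by
  have hsub : arcsIn N S ⊆ arcsIn N (insert b S) := arcsIn_mono (Set.subset_insert b S)
  refine Finset.card_lt_card <| (Finset.ssubset_iff_of_subset hsub).2 ?_
  obtain ⟨-, hab | hba⟩ := (fromRel_adj _ _ _).1 hab
  · exact ⟨(a, b), by simp [hab, ha], by simp [hb]⟩
  · exact ⟨(b, a), by simp [hba, ha], by simp [hb]⟩

lemma card_arcsIn_add_ncard_le {S B : Set V} (hB : ((underlying N).induce B).Preconnected)
    (hSB : S ⊆ B) (hS : S.Nonempty) : #(arcsIn N S) + B.ncard ≤ #(arcsIn N B) + S.ncard := by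
  induction h : B.ncard - S.ncard generalizing S with
  | zero =>
    obtain rfl : S = B := Set.eq_of_subset_of_ncard_le hSB (by omega)
    rfl
  | succ k ih =>
    obtain ⟨y, hy⟩ : (B \ S).Nonempty := by
      refine Set.nonempty_of_ncard_ne_zero fun h0 => ?_
      have := Set.ncard_sdiff hSB
      omega
    obtain ⟨a, ha, b, hb, hab⟩ :=
      exists_adj_of_induce_preconnected hB hSB hS.some_mem hy
    have hlt := card_arcsIn_lt_card_arcsIn_insert ha hb.2 hab
    have hcard := Set.ncard_insert_of_notMem hb.2
    have := ih (Set.insert_subset hb.1 hSB) (Set.insert_nonempty b S) (by omega)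
    omega

lemma ncard_le_card_arcsIn_add_one {S : Set V} (hS : ((underlying N).induce S).Preconnected)
    (hne : S.Nonempty) : S.ncard ≤ #(arcsIn N S) + 1 := by
  obtain ⟨x, hx⟩ := hne
  have := card_arcsIn_add_ncard_le hS (Set.singleton_subset_iff.2 hx) (Set.singleton_nonempty x)
  simp only [Set.ncard_singleton] at this
  omega

lemma card_arcsIn_add_one_le (hacyc : ∀ v, ¬ Relation.TransGen N v v)
    (hdeg : ∀ v, inDeg N v ≤ 2) {B : Set V} (hB : B.Nonempty) :
    #(arcsIn N B) + 1 ≤ B.ncard + (B ∩ {v | 2 ≤ inDeg N v}).ncard := by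
  classical
  have : IsStrictOrder V (Relation.TransGen N) := { irrefl := hacyc }
  obtain ⟨v₀, hv₀, hmin⟩ :=
    (Finite.wellFounded_of_trans_of_irrefl (Relation.TransGen N)).has_min B hB
  set B' := B.toFinset.erase v₀
  have harcs : arcsIn N B ⊆ B'.biUnion fun v => {u | N u v}.toFinset ×ˢ {v} := by
    intro p hp
    rw [mem_arcsIn] at hp
    have hne : p.2 ≠ v₀ := by
      rintro h
      exact hmin p.1 hp.2.1 (h ▸ Relation.TransGen.single hp.1)
    simp only [Finset.mem_biUnion, Finset.mem_product, Finset.mem_singleton, Set.mem_toFinset]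
    exact ⟨p.2, by simp [B', hne, hp.2.2], hp.1, rfl⟩
  have hin : ∀ v, inDeg N v ≤ 1 + if 2 ≤ inDeg N v then 1 else 0 := fun v => by
    have := hdeg v
    split_ifs <;> omega
  calc #(arcsIn N B) + 1
      ≤ ∑ v ∈ B', inDeg N v + 1 := by
        gcongr
        refine (Finset.card_le_card harcs).trans (Finset.card_biUnion_le.trans_eq ?_)
        simp [inDeg, Set.ncard_eq_toFinset_card']
    _ ≤ ∑ v ∈ B', (1 + if 2 ≤ inDeg N v then 1 else 0) + 1 := by gcongr with v; exact hin v
    _ = #B' + #(B'.filter fun v => 2 ≤ inDeg N v) + 1 := by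
        rw [Finset.sum_add_distrib, Finset.sum_boole]
        simp
    _ ≤ B.ncard + (B ∩ {v | 2 ≤ inDeg N v}).ncard := by
        have hB' : #B' + 1 = B.ncard := by
          rw [Finset.card_erase_add_one (by simpa using hv₀), Set.ncard_eq_toFinset_card']
        have : #(B'.filter fun v => 2 ≤ inDeg N v) ≤ (B ∩ {v | 2 ≤ inDeg N v}).ncard := by
          rw [Set.ncard_eq_toFinset_card']
          exact Finset.card_le_card fun v hv => by simp_all [B']
        omega

end Arcs

section Minor

variable {V β : Type*} {G : SimpleGraph V} {H : SimpleGraph β} {S : β → Set V}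

structure IsMinorModel (G : SimpleGraph V) (H : SimpleGraph β) (S : β → Set V) : Prop where
  nonempty : ∀ b, (S b).Nonempty
  preconnected : ∀ b, (G.induce (S b)).Preconnected
  pairwise_disjoint : Pairwise (Disjoint on S)
  adj : ∀ b c, H.Adj b c → ∃ x ∈ S b, ∃ y ∈ S c, G.Adj x y

def IsTight (G : SimpleGraph V) (S : β → Set V) : Prop :=
  ∀ b, ∀ v ∈ S b, ∀ w (hw : w ∈ S b \ {v}), ∃ a, ∃ ha : a ∈ S b \ {v},
    (G.induce (S b \ {v})).Reachable ⟨w, hw⟩ ⟨a, ha⟩ ∧ ∃ c ≠ b, ∃ y ∈ S c, G.Adj a y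

lemma IsMinorModel.eq_of_mem (hM : IsMinorModel G H S) {u : V} {b c : β} (hb : u ∈ S b)
    (hc : u ∈ S c) : b = c := by
  by_contra h
  exact Set.disjoint_left.1 (hM.pairwise_disjoint h) hb hc

lemma IsMinorOf.exists_isMinorModel_isTight [Finite V] (h : IsMinorOf H G)
    (hH : ∀ b, ∃ c, H.Adj b c) : ∃ S, IsMinorModel G H S ∧ IsTight G S := by
  obtain ⟨F, -, hF, hFdisj, hFadj⟩ := h
  choose x hx y hy hxy using hFadj
  let A b : Set V := {u | (∃ c h, x b c h = u) ∨ ∃ c h, y c b h = u}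
  have hAF : ∀ b, A b ⊆ F b := by
    rintro b u (⟨c, h, rfl⟩ | ⟨c, h, rfl⟩)
    exacts [hx b c h, hy c b h]
  choose S hAS hSF hS htight using fun b => exists_steiner (hAF b) (hF b)
  have hxS : ∀ b c h, x b c h ∈ S b := fun b c h => hAS b (.inl ⟨c, h, rfl⟩)
  have hyS : ∀ b c h, y b c h ∈ S c := fun b c h => hAS c (.inr ⟨b, h, rfl⟩)
  refine ⟨S, ⟨fun b => ?_, hS, fun b c hbc => (hFdisj b c hbc).mono (hSF b) (hSF c),
    fun b c h => ⟨_, hxS b c h, _, hyS b c h, hxy b c h⟩⟩, fun b v hv w hw => ?_⟩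
  · obtain ⟨c, h⟩ := hH b
    exact ⟨_, hxS b c h⟩
  · obtain ⟨a, haA, ha, hr⟩ := htight b v hv w hw
    refine ⟨a, ha, hr, ?_⟩
    rcases haA with ⟨c, h, rfl⟩ | ⟨c, h, rfl⟩
    · exact ⟨c, h.ne', _, hyS b c h, hxy b c h⟩
    · exact ⟨c, h.ne, _, hxS c b h, (hxy c b h).symm⟩

lemma IsMinorModel.isBiconn_iUnion [Nonempty β] (hM : IsMinorModel G H S) (hT : IsTight G S)
    (hH : H.Preconnected) (hH' : ∀ b, (H.induce {b}ᶜ).Preconnected) :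
    IsBiconn G (⋃ b, S b) := by
  set X := ⋃ b, S b
  have hSX : ∀ b, S b ⊆ X := Set.subset_iUnion S
  refine ⟨(hM.nonempty (Classical.arbitrary β)).mono (hSX _), ?_, fun v hv => ?_⟩
  · rintro ⟨u, hu⟩ ⟨w, hw⟩
    obtain ⟨b, hub⟩ := Set.mem_iUnion.1 hu
    obtain ⟨c, hwc⟩ := Set.mem_iUnion.1 hw
    exact reachable_induce_of_reachable hSX hM.preconnected hM.adj (hH b c) hub hwc
  obtain ⟨b₀, hvb₀⟩ := Set.mem_iUnion.1 hv
  have hsafe : ∀ c : ({b₀}ᶜ : Set β), S c ⊆ X \ {v} := fun c u hu =>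
    ⟨hSX c hu, by rintro rfl; exact c.2 (hM.eq_of_mem hu hvb₀)⟩
  have hescape : ∀ u (hu : u ∈ X \ {v}), ∃ c : ({b₀}ᶜ : Set β), ∃ a, ∃ ha : a ∈ S c,
      (G.induce (X \ {v})).Reachable ⟨u, hu⟩ ⟨a, hsafe c ha⟩ := by
    intro u hu
    obtain ⟨c, huc⟩ := Set.mem_iUnion.1 hu.1
    by_cases hc : c = b₀
    · subst hc
      obtain ⟨a, ha, hr, c', hc', y, hy, hay⟩ := hT c v hvb₀ u ⟨huc, hu.2⟩
      refine ⟨⟨c', hc'⟩, y, hy, ?_⟩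
      have hsub : S c \ {v} ⊆ X \ {v} := Set.sdiff_subset_sdiff_left (hSX c)
      have hay' : (G.induce (X \ {v})).Adj ⟨a, hsub ha⟩ ⟨y, hsafe ⟨c', hc'⟩ hy⟩ := hay
      exact (hr.map (induceHomOfLE G hsub).toHom).trans hay'.reachable
    · exact ⟨⟨c, hc⟩, u, huc, Reachable.refl _⟩
  rintro ⟨u, hu⟩ ⟨w, hw⟩
  obtain ⟨c, a, ha, hua⟩ := hescape u hu
  obtain ⟨c', a', ha', hwa'⟩ := hescape w hw
  exact hua.trans ((reachable_induce_of_reachable hsafe (fun c => hM.preconnected c)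
    (fun c c' h => hM.adj c c' h) (hH' b₀ c c') ha ha').trans hwa'.symm)

lemma IsMinorModel.card_edgeSet_add_ncard_iUnion_le [Fintype V] [Fintype β] [Nonempty β]
    {N : V → V → Prop} (hM : IsMinorModel (underlying N) H S) :
    Nat.card H.edgeSet + (⋃ b, S b).ncard ≤ #(arcsIn N (⋃ b, S b)) + Fintype.card β := by
  classical
  set X := ⋃ b, S b
  obtain ⟨idx, hidx⟩ : ∃ idx : V → β, ∀ b, ∀ u ∈ S b, idx u = b := by
    refine ⟨fun u => if h : ∃ b, u ∈ S b then h.choose else Classical.arbitrary β,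
      fun b u hu => ?_⟩
    have h : ∃ b, u ∈ S b := ⟨b, hu⟩
    dsimp only
    rw [dif_pos h]
    exact hM.eq_of_mem h.choose_spec hu
  have hinner : ∑ b, #(arcsIn N (S b)) ≤ #((arcsIn N X).filter fun p => idx p.1 = idx p.2) := by
    rw [← Finset.card_biUnion fun b _ c _ hbc => Finset.disjoint_left.2 fun p hb hc =>
      Set.disjoint_left.1 (hM.pairwise_disjoint hbc) (mem_arcsIn.1 hb).2.1 (mem_arcsIn.1 hc).2.1]
    refine Finset.card_le_card fun p hp => ?_
    obtain ⟨b, -, hp⟩ := Finset.mem_biUnion.1 hp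
    rw [mem_arcsIn] at hp
    simp [hp.1, Set.mem_iUnion.2 ⟨b, hp.2.1⟩, Set.mem_iUnion.2 ⟨b, hp.2.2⟩, X,
      hidx b _ hp.2.1, hidx b _ hp.2.2]
  have hcross : Nat.card H.edgeSet ≤ #((arcsIn N X).filter fun p => ¬idx p.1 = idx p.2) := by
    rw [Nat.card_eq_fintype_card, ← edgeFinset_card]
    refine Finset.card_le_card_of_surjOn (fun p => s(idx p.1, idx p.2)) ?_
    intro e he
    induction e using Sym2.ind with | h b c => ?_
    have hbc : H.Adj b c := by simpa using he
    obtain ⟨x, hx, y, hy, hxy⟩ := hM.adj b c hbc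
    have hxX : x ∈ X := Set.mem_iUnion.2 ⟨b, hx⟩
    have hyX : y ∈ X := Set.mem_iUnion.2 ⟨c, hy⟩
    rcases ((fromRel_adj _ _ _).1 hxy).2 with h | h
    · exact ⟨(x, y), by simp [h, hxX, hyX, hidx b x hx, hidx c y hy, hbc.ne],
        by simp [hidx b x hx, hidx c y hy]⟩
    · exact ⟨(y, x), by simp [h, hxX, hyX, hidx b x hx, hidx c y hy, hbc.ne'],
        by simp [hidx b x hx, hidx c y hy, Sym2.eq_swap]⟩
  have hsplit := Finset.card_filter_add_card_filter_not (s := arcsIn N X) fun p => idx p.1 = idx p.2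
  have hX : X.ncard ≤ ∑ b, #(arcsIn N (S b)) + Fintype.card β := calc
    X.ncard ≤ ∑ b, (S b).ncard := Set.ncard_iUnion_le_of_fintype S
    _ ≤ ∑ b, (#(arcsIn N (S b)) + 1) := Finset.sum_le_sum fun b _ =>
      ncard_le_card_arcsIn_add_one (hM.preconnected b) (hM.nonempty b)
    _ = ∑ b, #(arcsIn N (S b)) + Fintype.card β := by simp [Finset.sum_add_distrib]
  omega

end Minor

section Level

variable {V : Type*} [Finite V]

lemma IsBiconn.exists_isBlob_superset {G : SimpleGraph V} {X : Set V} (hX : IsBiconn G X) :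
    ∃ B, IsBlob G B ∧ X ⊆ B := by
  obtain ⟨B, hXB, hB⟩ := Finite.exists_le_maximal hX
  exact ⟨B, ⟨hB.prop, fun B' hB' hBB' => hB.eq_of_superset hB' hBB'⟩, hXB⟩

lemma IsBlob.ncard_inter_le_level {N : V → V → Prop} {B : Set V} (hB : IsBlob (underlying N) B) :
    (B ∩ {v | 2 ≤ inDeg N v}).ncard ≤ level N :=
  le_csSup ⟨Nat.card V, by rintro k ⟨B', -, rfl⟩; exact Set.ncard_le_card _⟩ ⟨B, hB, rfl⟩

end Level

lemma IsBinary.inDeg_le_two {V : Type*} {N : V → V → Prop} {ρ : V} (hbin : IsBinary N ρ) (v : V) :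
    inDeg N v ≤ 2 := by
  by_cases h : 2 ≤ inDeg N v
  · exact (hbin.retic_deg v h).1.le
  · omega

theorem card_edgeSet_add_one_le_card_add_level {V β : Type*} [Fintype V] [Fintype β]
    [Nontrivial β] {N : V → V → Prop} (hacyc : ∀ v, ¬ Relation.TransGen N v v)
    (hdeg : ∀ v, inDeg N v ≤ 2) {H : SimpleGraph β} (hH : H.Preconnected)
    (hH' : ∀ b, (H.induce {b}ᶜ).Preconnected) (hminor : IsMinorOf H (underlying N)) :
    Nat.card H.edgeSet + 1 ≤ Fintype.card β + level N := by
  obtain ⟨S, hM, hT⟩ := hminor.exists_isMinorModel_isTight hH.exists_adj_of_nontrivial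
  have hX := hM.isBiconn_iUnion hT hH hH'
  obtain ⟨B, hB, hXB⟩ := hX.exists_isBlob_superset
  have h₁ := hM.card_edgeSet_add_ncard_iUnion_le
  have h₂ := card_arcsIn_add_ncard_le hB.1.2.1 hXB hX.1
  have h₃ := card_arcsIn_add_one_le hacyc hdeg hB.1.1
  have h₄ := hB.ncard_inter_le_level
  omega

lemma gridGraph_eq_boxProd (n m : ℕ) : gridGraph n m = pathGraph n □ pathGraph m := by
  ext ⟨a, b⟩ ⟨c, d⟩
  simp only [gridGraph, fromRel_adj, boxProd_adj, pathGraph_adj, ne_eq, Prod.mk.injEq, Fin.ext_iff]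
  omega

lemma sub_one_le_card_edgeSet_pathGraph (n : ℕ) : n - 1 ≤ Nat.card (pathGraph n).edgeSet := by
  cases n with
  | zero => simp
  | succ n => simpa using (pathGraph_connected n).card_vert_le_card_edgeSet_add_one

end Phylo

/-- a binary phylogenetic network with an `n × m` grid minor has
level at least `(n-1)(m-1)`. -/
theorem stmt15 {V : Type*} [Fintype V] (N : V → V → Prop) (ρ : V)
    (hphy : IsPhyloNet N ρ) (hbin : IsBinary N ρ) (n m : ℕ)
    (hminor : IsMinorOf (gridGraph n m) (underlying N)) :
    (n - 1) * (m - 1) ≤ level N := by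
  obtain hn | hn := lt_or_ge n 2
  · simp [Nat.sub_eq_zero_of_le (Nat.le_of_lt_succ hn)]
  obtain hm | hm := lt_or_ge m 2
  · simp [Nat.sub_eq_zero_of_le (Nat.le_of_lt_succ hm)]
  have : Nontrivial (Fin n) := Fin.nontrivial_iff_two_le.2 hn
  have : Nontrivial (Fin m) := Fin.nontrivial_iff_two_le.2 hm
  rw [gridGraph_eq_boxProd] at hminor
  have hP := pathGraph_preconnected
  have hlevel := card_edgeSet_add_one_le_card_add_level hphy.acyclic hbin.inDeg_le_two
    ((hP n).boxProd (hP m)) (boxProd_induce_compl_preconnected (hP n) (hP m)) hminor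
  rw [card_edgeSet_boxProd] at hlevel
  have hn' := sub_one_le_card_edgeSet_pathGraph n
  have hm' := sub_one_le_card_edgeSet_pathGraph m
  simp only [Nat.card_eq_fintype_card, Fintype.card_prod, Fintype.card_fin] at hlevel hn' hm'
  obtain ⟨a, rfl⟩ : ∃ a, n = a + 1 := ⟨n - 1, by omega⟩
  obtain ⟨b, rfl⟩ : ∃ b, m = b + 1 := ⟨m - 1, by omega⟩
  simp only [Nat.add_sub_cancel] at hn' hm' ⊢
  nlinarith
end
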